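/- arXiv:1401.0992 — 4 statements merged into one kernel-verified Lean document; each statement's English description precedes it below -/
import Mathlib

section
/- Let Z = { x ∈ ℝ_{>0}^{r+s} : ∏_{σ real} x_σ · ∏_{σ complex} x_σ² = 1 }. The image of the unit group O_K^× under the map ξ ↦ (|σ(ξ)|)_{σ∈S} is a cocompact subgroup of the multiplicative group Z; equivalently, there exists a constant C ≥ 1 such that for every x ∈ Z there is a unit ξ ∈ O_K^× with C^{-1} ≤ |σ(ξ)| · x_σ ≤ C for all σ ∈ S. -/
/-!
Taking logarithms, `x ↦ (mult w · log x_w)_w` identifies `Z` with the hyperplane `∑_w y_w = 0`,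
which projects isomorphically onto `logSpace K` by forgetting the coordinate at `w₀`; under this
map the units go to the unit lattice, a full-rank lattice by Dirichlet's theorem. So every point
is within a bounded distance `B` of the image of a unit; the coordinate at `w₀` is then bounded
by `card · B` because all coordinates sum to zero, and exponentiating gives `C = exp (card · B)`.
-/

open NumberField
open scoped Classical
noncomputable section

open NumberField.InfinitePlace NumberField.Units NumberField.Units.dirichletUnitTheorem

theorem ZLattice.exists_norm_sub_le {E : Type*} [NormedAddCommGroup E] [NormedSpace ℝ E]
    [FiniteDimensional ℝ E] (L : Submodule ℤ E) [DiscreteTopology L] [IsZLattice ℝ L] :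
    ∃ B, 0 ≤ B ∧ ∀ v : E, ∃ ℓ ∈ L, ‖v - ℓ‖ ≤ B := by
  let b := (Module.Free.chooseBasis ℤ L).ofZLatticeBasis ℝ L
  refine ⟨∑ i, ‖b i‖, by positivity, fun v => ⟨ZSpan.floor b v, ?_, ZSpan.norm_fract_le b v⟩⟩
  exact ((Module.Free.chooseBasis ℤ L).ofZLatticeBasis_span ℝ L).le (ZSpan.floor b v).2

open Finset in
theorem abs_le_card_mul_of_sum_eq_zero {ι : Type*} [Fintype ι] {f : ι → ℝ}
    (hf : ∑ i, f i = 0) {j : ι} {B : ℝ} (hB0 : 0 ≤ B) (hB : ∀ i ≠ j, |f i| ≤ B) (i : ι) :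
    |f i| ≤ Fintype.card ι * B := by
  have hcard : (1 : ℝ) ≤ Fintype.card ι := by exact_mod_cast Fintype.card_pos_iff.2 ⟨i⟩
  obtain hij | rfl := ne_or_eq i j
  · nlinarith [hB i hij]
  have hfi : f i = -∑ k ∈ univ.erase i, f k := by
    rw [eq_neg_iff_add_eq_zero, add_sum_erase _ _ (mem_univ i), hf]
  calc |f i| ≤ ∑ k ∈ univ.erase i, |f k| := hfi ▸ (abs_neg _).trans_le (abs_sum_le_sum_abs _ _)
    _ ≤ (univ.erase i).card • B :=
        sum_le_card_nsmul _ _ _ fun k hk => hB k (ne_of_mem_erase hk)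
    _ ≤ Fintype.card ι * B := by
        rw [nsmul_eq_mul]
        gcongr
        exact_mod_cast card_erase_le.trans_eq card_univ

theorem Real.exp_neg_le_and_le_exp_of_abs_log_le {x a : ℝ} (hx : 0 < x) (h : |Real.log x| ≤ a) :
    Real.exp (-a) ≤ x ∧ x ≤ Real.exp a := by
  rwa [← Real.le_log_iff_exp_le hx, ← Real.log_le_iff_le_exp hx, ← abs_le]

section NumberField

variable {K : Type*} [Field K] [NumberField K]

theorem NumberField.Units.exists_norm_sub_logEmbedding_le :
    ∃ B, 0 ≤ B ∧ ∀ v : logSpace K, ∃ ξ : (𝓞 K)ˣ, ‖v - logEmbedding K (Additive.ofMul ξ)‖ ≤ B := by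
  obtain ⟨B, hB0, hB⟩ := ZLattice.exists_norm_sub_le (unitLattice K)
  refine ⟨B, hB0, fun v => ?_⟩
  obtain ⟨ℓ, ⟨ξ, -, rfl⟩, hℓ⟩ := hB v
  exact ⟨ξ.toMul, hℓ⟩

theorem NumberField.InfinitePlace.prod_pow_mult_eq_prod_real_mul_prod_complex
    {x : InfinitePlace K → ℝ} :
    ∏ w, x w ^ mult w = (∏ w ∈ Finset.univ.filter (fun w : InfinitePlace K => w.IsReal), x w) *
      ∏ w ∈ Finset.univ.filter (fun w : InfinitePlace K => w.IsComplex), x w ^ 2 := by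
  rw [prod_eq_prod_mul_prod, Finset.prod_subtype _ (p := IsReal) (by simp),
    Finset.prod_subtype _ (p := IsComplex) (by simp)]
  congr 1 <;> refine Finset.prod_congr rfl fun w _ => ?_
  · rw [mult_isReal w, pow_one]
  · rw [mult_isComplex w]

theorem NumberField.InfinitePlace.sum_mult_mul_log_eq_zero {x : InfinitePlace K → ℝ}
    (hx : ∀ w, 0 < x w) (h : ∏ w, x w ^ mult w = 1) :
    ∑ w, (mult w : ℝ) * Real.log (x w) = 0 := by
  simpa [Real.log_prod, Real.log_pow, fun w => (hx w).ne'] using congr_arg Real.log h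

end NumberField

/-- The image of the unit group `O_K^×` under `ξ ↦ (|σ(ξ)|)_σ` is cocompact in the group
`Z = {x ∈ ℝ_{>0}^{r+s} : ∏_{real} x_σ ∏_{complex} x_σ² = 1}`: there is `C ≥ 1` such that every
`x ∈ Z` can be brought within `[C⁻¹, C]` coordinatewise by a unit. -/
theorem units_cocompact (K : Type*) [Field K] [NumberField K] :
    ∃ C : ℝ, 1 ≤ C ∧
      ∀ x : InfinitePlace K → ℝ, (∀ w, 0 < x w) →
        (∏ w ∈ Finset.univ.filter (fun w : InfinitePlace K => w.IsReal), x w) *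
          (∏ w ∈ Finset.univ.filter (fun w : InfinitePlace K => w.IsComplex), (x w) ^ 2) = 1 →
        ∃ ξ : (𝓞 K)ˣ, ∀ w : InfinitePlace K,
          C⁻¹ ≤ w (algebraMap (𝓞 K) K ξ) * x w ∧ w (algebraMap (𝓞 K) K ξ) * x w ≤ C := by
  obtain ⟨B, hB0, hB⟩ := exists_norm_sub_logEmbedding_le (K := K)
  refine ⟨Real.exp (Fintype.card (InfinitePlace K) * B), Real.one_le_exp (by positivity),
    fun x hx hprod => ?_⟩
  -- `ξ` is chosen so that `logEmbedding ξ` approximates the logarithmic image of `x⁻¹`.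
  obtain ⟨ξ, hξ⟩ := hB fun w => -(mult w.1 * Real.log (x w.1))
  let f w : ℝ := mult w * Real.log (w (ξ : K) * x w)
  have hf_sum : ∑ w, f w = 0 := by
    simp only [f, Real.log_mul (pos_at_place ξ _).ne' (hx _).ne', mul_add, Finset.sum_add_distrib,
      sum_mult_mul_log, add_zero,
      sum_mult_mul_log_eq_zero hx (prod_pow_mult_eq_prod_real_mul_prod_complex.trans hprod)]
  have hf_ne : ∀ w ≠ w₀, |f w| ≤ B := fun w hw => by
    refine le_trans (le_of_eq ?_) ((norm_le_pi_norm _ ⟨w, hw⟩).trans hξ)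
    rw [Real.norm_eq_abs, ← abs_neg]
    congr 1
    simp only [f, Real.log_mul (pos_at_place ξ _).ne' (hx _).ne', Pi.sub_apply,
      logEmbedding_component]
    ring
  refine ⟨ξ, fun w => ?_⟩
  rw [← Real.exp_neg]
  refine Real.exp_neg_le_and_le_exp_of_abs_log_le (mul_pos (pos_at_place ξ w) (hx w)) ?_
  calc |Real.log (w (ξ : K) * x w)| ≤ mult w * |Real.log (w (ξ : K) * x w)| :=
        le_mul_of_one_le_left (abs_nonneg _) one_le_mult
    _ = |f w| := by simp [f, abs_mul]
    _ ≤ _ := abs_le_card_mul_of_sum_eq_zero hf_sum hB0 hf_ne w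
end
end

section
/- Let x ∈ ℝ be badly approximable in the classical sense (there exists c > 0 with |qx − p| > c/q for all positive integers q and all integers p). Then for all t ≥ 0 and all nonzero (q,p) ∈ ℤ², max(e^{-t}|q|, e^{t}|qx + p|) ≥ c' for some c' > 0 depending only on c. Conversely, if such a c' exists then x is badly approximable. -/
/-- Classical Dani correspondence for `K = ℚ`: a real number `x` is badly approximable
(`∃ c > 0, |qx − p| > c/q` for all integers `q > 0`, `p`) if and only if there is `c' > 0`
such that for all `t ≥ 0` and all nonzero `(q,p) ∈ ℤ²`,
`max(e^{−t}|q|, e^{t}|qx + p|) ≥ c'`. -/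
theorem dani_correspondence_rat (x : ℝ) :
    (∃ c : ℝ, 0 < c ∧ ∀ q p : ℤ, 0 < q → c / q < |(q : ℝ) * x - p|) ↔
    (∃ c' : ℝ, 0 < c' ∧ ∀ t : ℝ, 0 ≤ t → ∀ q p : ℤ, ¬(q = 0 ∧ p = 0) →
      c' ≤ max (Real.exp (-t) * |(q : ℝ)|) (Real.exp t * |(q : ℝ) * x + p|)) := by
  constructor
  · rintro ⟨c, hc, h⟩
    refine ⟨min (Real.sqrt c) 1, lt_min (Real.sqrt_pos.2 hc) one_pos, ?_⟩
    intro t ht q p hqp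
    have hexp : (0:ℝ) < Real.exp (-t) := Real.exp_pos _
    have hexp' : (0:ℝ) < Real.exp t := Real.exp_pos _
    rcases eq_or_ne q 0 with hq | hq
    · subst hq
      have hp : p ≠ 0 := fun hp => hqp ⟨rfl, hp⟩
      have h1 : (1:ℝ) ≤ |(p:ℝ)| := by
        rw [← Int.cast_abs]
        exact_mod_cast Int.one_le_abs hp
      have h2 : (1:ℝ) ≤ Real.exp t * |(0:ℤ) * x + p| := by
        push_cast
        rw [zero_mul, zero_add]
        nlinarith [Real.one_le_exp ht]
      exact le_trans (min_le_right _ _) (le_trans h2 (le_max_right _ _))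
    · have key : c < |(q:ℝ)| * |(q:ℝ) * x + p| := by
        rcases lt_or_gt_of_ne hq with hq' | hq'
        · have h0 := h (-q) p (by omega)
          have hqr : (0:ℝ) < -(q:ℝ) := by
            have : (q:ℝ) < 0 := by exact_mod_cast hq'
            linarith
          push_cast at h0
          rw [div_lt_iff₀ hqr] at h0
          have habs : |(-(q:ℝ)) * x - p| = |(q:ℝ) * x + p| := by
            rw [show (-(q:ℝ)) * x - p = -((q:ℝ) * x + p) by ring, abs_neg]
          rw [habs] at h0
          rw [abs_of_neg (show (q:ℝ) < 0 by exact_mod_cast hq')]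
          nlinarith [abs_nonneg ((q:ℝ) * x + p)]
        · have h0 := h q (-p) hq'
          have hqr : (0:ℝ) < (q:ℝ) := by exact_mod_cast hq'
          rw [div_lt_iff₀ hqr] at h0
          push_cast at h0
          have habs : |(q:ℝ) * x - (-p)| = |(q:ℝ) * x + p| := by ring_nf
          rw [habs] at h0
          rw [abs_of_pos hqr]
          linarith
      set M := max (Real.exp (-t) * |(q:ℝ)|) (Real.exp t * |(q:ℝ) * x + p|) with hM
      have hM0 : 0 ≤ M := le_trans (by positivity) (le_max_left _ _)
      have hprod : c < M ^ 2 := by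
        have h1 : Real.exp (-t) * |(q:ℝ)| ≤ M := le_max_left _ _
        have h2 : Real.exp t * |(q:ℝ) * x + p| ≤ M := le_max_right _ _
        have hee : Real.exp (-t) * Real.exp t = 1 := by
          rw [← Real.exp_add]; simp
        have h3 : Real.exp (-t) * |(q:ℝ)| * (Real.exp t * |(q:ℝ) * x + p|) ≤ M * M :=
          mul_le_mul h1 h2 (by positivity) hM0
        have h4 : Real.exp (-t) * |(q:ℝ)| * (Real.exp t * |(q:ℝ) * x + p|)
            = |(q:ℝ)| * |(q:ℝ) * x + p| := by
          calc Real.exp (-t) * |(q:ℝ)| * (Real.exp t * |(q:ℝ) * x + p|)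
              = (Real.exp (-t) * Real.exp t) * (|(q:ℝ)| * |(q:ℝ) * x + p|) := by ring
            _ = |(q:ℝ)| * |(q:ℝ) * x + p| := by rw [hee, one_mul]
        rw [pow_two]
        linarith
      calc min (Real.sqrt c) 1 ≤ Real.sqrt c := min_le_left _ _
        _ ≤ Real.sqrt (M ^ 2) := Real.sqrt_le_sqrt hprod.le
        _ = M := by rw [Real.sqrt_sq hM0]
  · rintro ⟨c', hc', h⟩
    have hc1 : c' ≤ 1 := by
      have := h 0 le_rfl 0 1 (by simp)
      simpa using this
    refine ⟨c' ^ 2 / 4, by positivity, ?_⟩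
    intro q p hq
    have hqr : (0:ℝ) < (q:ℝ) := by exact_mod_cast hq
    have hratio : (1:ℝ) ≤ 2 * q / c' := by
      rw [le_div_iff₀ hc']
      have : (1:ℝ) ≤ (q:ℝ) := by exact_mod_cast hq
      nlinarith
    set t := Real.log (2 * q / c') with htdef
    have ht : 0 ≤ t := Real.log_nonneg hratio
    have het : Real.exp t = 2 * q / c' := Real.exp_log (by positivity)
    have hnet : Real.exp (-t) = c' / (2 * q) := by
      rw [Real.exp_neg, het, inv_div]
    have hmax := h t ht q (-p) (fun ⟨h1, _⟩ => by omega)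
    have hfirst : Real.exp (-t) * |(q:ℝ)| < c' := by
      rw [hnet, abs_of_pos hqr]
      rw [div_mul_eq_mul_div, div_lt_iff₀ (by positivity)]
      nlinarith
    have hsecond : c' ≤ Real.exp t * |(q:ℝ) * x + (-p:ℤ)| := by
      rcases max_cases (Real.exp (-t) * |(q:ℝ)|) (Real.exp t * |(q:ℝ) * x + (-p:ℤ)|) with
        ⟨heq, hle⟩ | ⟨heq, hle⟩
      · rw [heq] at hmax; linarith
      · rw [heq] at hmax; exact hmax
    have habs : |(q:ℝ) * x + ((-p:ℤ):ℝ)| = |(q:ℝ) * x - p| := by push_cast; ring_nf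
    rw [habs, het] at hsecond
    rw [div_lt_iff₀ hqr]
    have hq2 : (0:ℝ) < 2 * q / c' := by positivity
    rw [div_mul_eq_mul_div, le_div_iff₀ hc'] at hsecond
    nlinarith [abs_nonneg ((q:ℝ) * x - p)]
end

section
/- Let K be a number field and x = (x^σ)_{σ∈S} ∈ K_S be K-badly approximable with constant c > 0, i.e., max_{σ∈S}|σ(q)x^σ + σ(p)| · max_{σ∈S}|σ(q)| > c for all p, q ∈ O_K with q ≠ 0. Then there exists c' > 0 such that for all t ≥ 0 and all nonzero (q,p) ∈ O_K², max_{σ∈S} max( e^{-t}|σ(q)|, e^{t}|σ(q)x^σ + σ(p)| ) > c'. -/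
open NumberField
noncomputable section

private lemma aux_one_le_sup_norm (K : Type*) [Field K] [NumberField K]
    (q : 𝓞 K) (hq : q ≠ 0) :
    1 ≤ Finset.univ.sup' Finset.univ_nonempty (fun w : InfinitePlace K =>
      ‖w.embedding (algebraMap (𝓞 K) K q)‖) := by
  set A := Finset.univ.sup' Finset.univ_nonempty (fun w : InfinitePlace K =>
      ‖w.embedding (algebraMap (𝓞 K) K q)‖) with hA
  have hA0 : 0 ≤ A := le_trans (norm_nonneg _)
    (Finset.le_sup' (fun w : InfinitePlace K => ‖w.embedding (algebraMap (𝓞 K) K q)‖)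
      (Finset.mem_univ (Classical.arbitrary (InfinitePlace K))))
  by_contra hlt
  push_neg at hlt
  have hnorm : (1 : ℝ) ≤ |Algebra.norm ℚ (algebraMap (𝓞 K) K q)| := by
    rw [show (algebraMap (𝓞 K) K q) = (q : K) from rfl, ← Algebra.coe_norm_int,
      ← Int.cast_one, ← Int.cast_abs, Rat.cast_intCast]
    exact_mod_cast Int.one_le_abs (Algebra.norm_ne_zero_iff.mpr hq)
  have hprod := NumberField.InfinitePlace.prod_eq_abs_norm (algebraMap (𝓞 K) K q)
  have hle : ∏ w : InfinitePlace K, (w (algebraMap (𝓞 K) K q)) ^ w.mult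
      ≤ ∏ w : InfinitePlace K, A ^ w.mult := by
    refine Finset.prod_le_prod (fun w _ => by positivity) (fun w _ => ?_)
    refine pow_le_pow_left₀ (by positivity) ?_ _
    rw [← NumberField.InfinitePlace.norm_embedding_eq]
    exact Finset.le_sup' (fun w : InfinitePlace K =>
      ‖w.embedding (algebraMap (𝓞 K) K q)‖) (Finset.mem_univ w)
  rw [Finset.prod_pow_eq_pow_sum, NumberField.InfinitePlace.sum_mult_eq] at hle
  have hfin : Module.finrank ℚ K ≠ 0 := Module.finrank_pos.ne'
  have hpow : A ^ Module.finrank ℚ K < 1 := pow_lt_one₀ hA0 hlt hfin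
  rw [hprod] at hle
  rw [Rat.cast_abs] at hle
  push_cast at hnorm
  linarith

/-- The converse direction of Dani's correspondence for a number field `K`: if `x ∈ K_S` is
`K`-badly approximable with constant `c > 0`, then there is `c' > 0` such that for all `t ≥ 0`
and nonzero `(q,p) ∈ O_K²`, `max_σ max(e^{−t}|σ(q)|, e^{t}|σ(q)x^σ + σ(p)|) > c'`. -/
theorem dani_bad_implies_bounded (K : Type*) [Field K] [NumberField K]
    (x : InfinitePlace K → ℂ) (c : ℝ) (hc : 0 < c)
    (h : ∀ q p : 𝓞 K, q ≠ 0 →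
      c < (Finset.univ.sup' Finset.univ_nonempty (fun w : InfinitePlace K =>
            ‖w.embedding (algebraMap (𝓞 K) K q) * x w + w.embedding (algebraMap (𝓞 K) K p)‖)) *
          (Finset.univ.sup' Finset.univ_nonempty (fun w : InfinitePlace K =>
            ‖w.embedding (algebraMap (𝓞 K) K q)‖))) :
    ∃ c' : ℝ, 0 < c' ∧ ∀ t : ℝ, 0 ≤ t → ∀ q p : 𝓞 K, ¬(q = 0 ∧ p = 0) →
      c' < Finset.univ.sup' Finset.univ_nonempty (fun w : InfinitePlace K =>
        max (Real.exp (-t) * ‖w.embedding (algebraMap (𝓞 K) K q)‖)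
          (Real.exp t * ‖w.embedding (algebraMap (𝓞 K) K q) * x w +
            w.embedding (algebraMap (𝓞 K) K p)‖)) := by
  refine ⟨min (Real.sqrt c) (1/2), lt_min (Real.sqrt_pos.mpr hc) (by norm_num),
    fun t ht q p hqp => ?_⟩
  set M := Finset.univ.sup' Finset.univ_nonempty (fun w : InfinitePlace K =>
        max (Real.exp (-t) * ‖w.embedding (algebraMap (𝓞 K) K q)‖)
          (Real.exp t * ‖w.embedding (algebraMap (𝓞 K) K q) * x w +
            w.embedding (algebraMap (𝓞 K) K p)‖)) with hM
  by_cases hq : q = 0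
  · -- then p ≠ 0
    have hp : p ≠ 0 := fun hp => hqp ⟨hq, hp⟩
    have h1 : (1 : ℝ) ≤ Finset.univ.sup' Finset.univ_nonempty (fun w : InfinitePlace K =>
        ‖w.embedding (algebraMap (𝓞 K) K p)‖) := aux_one_le_sup_norm K p hp
    have h2 : Finset.univ.sup' Finset.univ_nonempty (fun w : InfinitePlace K =>
        ‖w.embedding (algebraMap (𝓞 K) K p)‖) ≤ M := by
      refine Finset.sup'_le _ _ (fun w _ => ?_)
      refine le_trans ?_ (Finset.le_sup' _ (Finset.mem_univ w))
      refine le_trans ?_ (le_max_right _ _)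
      subst hq
      simp only [map_zero, zero_mul, zero_add]
      nlinarith [Real.one_le_exp ht, norm_nonneg (w.embedding (algebraMap (𝓞 K) K p))]
    calc min (Real.sqrt c) (1/2) ≤ 1/2 := min_le_right _ _
      _ < 1 := by norm_num
      _ ≤ M := le_trans h1 h2
  · set A := Finset.univ.sup' Finset.univ_nonempty (fun w : InfinitePlace K =>
        ‖w.embedding (algebraMap (𝓞 K) K q)‖) with hA
    set B := Finset.univ.sup' Finset.univ_nonempty (fun w : InfinitePlace K =>
        ‖w.embedding (algebraMap (𝓞 K) K q) * x w + w.embedding (algebraMap (𝓞 K) K p)‖) with hB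
    have hAB : c < B * A := h q p hq
    have hA1 : 1 ≤ A := aux_one_le_sup_norm K q hq
    have hB0 : 0 ≤ B := le_trans (norm_nonneg _)
      (Finset.le_sup' (fun w : InfinitePlace K =>
          ‖w.embedding (algebraMap (𝓞 K) K q) * x w + w.embedding (algebraMap (𝓞 K) K p)‖)
        (Finset.mem_univ (Classical.arbitrary (InfinitePlace K))))
    -- M ≥ exp(-t) * A
    obtain ⟨wA, _, hwA⟩ := Finset.exists_mem_eq_sup' (Finset.univ_nonempty)
      (fun w : InfinitePlace K => ‖w.embedding (algebraMap (𝓞 K) K q)‖)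
    have hMA : Real.exp (-t) * A ≤ M := by
      rw [hA, hwA]
      exact le_trans (le_max_left _ (Real.exp t * ‖wA.embedding (algebraMap (𝓞 K) K q) * x wA +
          wA.embedding (algebraMap (𝓞 K) K p)‖))
        (Finset.le_sup' (fun w : InfinitePlace K =>
        max (Real.exp (-t) * ‖w.embedding (algebraMap (𝓞 K) K q)‖)
          (Real.exp t * ‖w.embedding (algebraMap (𝓞 K) K q) * x w +
            w.embedding (algebraMap (𝓞 K) K p)‖)) (Finset.mem_univ wA))
    obtain ⟨wB, _, hwB⟩ := Finset.exists_mem_eq_sup' (Finset.univ_nonempty)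
      (fun w : InfinitePlace K =>
        ‖w.embedding (algebraMap (𝓞 K) K q) * x w + w.embedding (algebraMap (𝓞 K) K p)‖)
    have hMB : Real.exp t * B ≤ M := by
      rw [hB, hwB]
      exact le_trans (le_max_right (Real.exp (-t) * ‖wB.embedding (algebraMap (𝓞 K) K q)‖) _)
        (Finset.le_sup' (fun w : InfinitePlace K =>
        max (Real.exp (-t) * ‖w.embedding (algebraMap (𝓞 K) K q)‖)
          (Real.exp t * ‖w.embedding (algebraMap (𝓞 K) K q) * x w +
            w.embedding (algebraMap (𝓞 K) K p)‖)) (Finset.mem_univ wB))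
    have hM0 : 0 < M := lt_of_lt_of_le (by positivity) hMA
    have hsq : c < M * M := by
      calc c < B * A := hAB
        _ = (Real.exp (-t) * A) * (Real.exp t * B) := by
            rw [Real.exp_neg]; field_simp
        _ ≤ M * M := by
            refine mul_le_mul hMA hMB (by positivity) (le_of_lt hM0)
    have : Real.sqrt c < M := by
      rw [show M * M = M ^ 2 by ring] at hsq
      exact (Real.sqrt_lt' hM0).mpr hsq
    exact lt_of_le_of_lt (min_le_left _ _) this
end
end

section
/- Let X be a complete metric space and let W₁, W₂ ⊆ X both be α-winning for Schmidt's game for the same α ∈ (0,1). Then W₁ ∩ W₂ is α-winning. -/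
open Metric
noncomputable section

/-- `W` is `(α,β)`-winning for Player B in Schmidt's game on the metric space `X` if Player B
has a strategy `f` (choosing the center of the next ball from the initial radius and the
history of Player A's centers) such that, whenever Player A plays legally, all of Player B's
moves are legal and every point lying in all of Player A's balls belongs to `W`.
At stage `n`, Player A's ball has radius `ρ (αβ)^n` and Player B's ball has radius
`α ρ (αβ)^n`. -/
def IsWinningStrategy {X : Type*} [MetricSpace X] (α β : ℝ) (W : Set X)
    (f : ℝ → (n : ℕ) → (Fin (n + 1) → X) → X) : Prop :=
  ∀ ρ : ℝ, 0 < ρ → ∀ a : ℕ → X,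
    (∀ n : ℕ, closedBall (a (n + 1)) (ρ * (α * β) ^ (n + 1)) ⊆
        closedBall (f ρ n fun i : Fin (n + 1) => a i) (α * ρ * (α * β) ^ n)) →
      (∀ n : ℕ, closedBall (f ρ n fun i : Fin (n + 1) => a i) (α * ρ * (α * β) ^ n) ⊆
          closedBall (a n) (ρ * (α * β) ^ n)) ∧
      ∀ x : X, (∀ n : ℕ, x ∈ closedBall (a n) (ρ * (α * β) ^ n)) → x ∈ W

/-- `W` is `α`-winning if for every `β ∈ (0,1)` Player B has a winning strategy in the
`(α,β)`-game with target set `W`. -/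
def IsAlphaWinning {X : Type*} [MetricSpace X] (α : ℝ) (W : Set X) : Prop :=
  ∀ β : ℝ, 0 < β → β < 1 →
    ∃ f : ℝ → (n : ℕ) → (Fin (n + 1) → X) → X, IsWinningStrategy α β W f

/-- Extend a finite play by letting A copy B's centers forever after stage `N`. -/
private def extPlay {X : Type*} (f : ℝ → (n : ℕ) → (Fin (n + 1) → X) → X)
    (ρ : ℝ) (a : ℕ → X) (N : ℕ) : ℕ → X
  | 0 => a 0
  | (n + 1) =>
      if n + 1 ≤ N then a (n + 1)
      else f ρ n (fun i : Fin (n + 1) => extPlay f ρ a N i)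
  termination_by n => n
  decreasing_by exact i.isLt

private lemma partial_containment {X : Type*} [MetricSpace X] {α β : ℝ}
    (hα0 : 0 < α) (hβ0 : 0 < β) (hβ1 : β ≤ 1)
    {W : Set X} {f : ℝ → (n : ℕ) → (Fin (n + 1) → X) → X}
    (hf : IsWinningStrategy α β W f) {ρ : ℝ} (hρ : 0 < ρ) (a : ℕ → X) (N : ℕ)
    (hleg : ∀ k, k < N → closedBall (a (k + 1)) (ρ * (α * β) ^ (k + 1)) ⊆
        closedBall (f ρ k fun i : Fin (k + 1) => a i) (α * ρ * (α * β) ^ k)) :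
    closedBall (f ρ N fun i : Fin (N + 1) => a i) (α * ρ * (α * β) ^ N) ⊆
      closedBall (a N) (ρ * (α * β) ^ N) := by
  set b := extPlay f ρ a N with hb
  have hba : ∀ k, k ≤ N → b k = a k := by
    intro k hk
    cases k with
    | zero => rw [hb, extPlay]
    | succ n => rw [hb, extPlay, if_pos hk]
  have hfun : ∀ k, k ≤ N → (fun i : Fin (k + 1) => b i) = (fun i : Fin (k + 1) => a i) := by
    intro k hk
    funext i
    exact hba _ (by have := i.isLt; omega)
  have hblegal : ∀ n : ℕ, closedBall (b (n + 1)) (ρ * (α * β) ^ (n + 1)) ⊆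
      closedBall (f ρ n fun i : Fin (n + 1) => b i) (α * ρ * (α * β) ^ n) := by
    intro n
    by_cases h : n + 1 ≤ N
    · rw [hba _ h, hfun n (by omega)]
      exact hleg n (by omega)
    · have h1 : b (n + 1) = f ρ n (fun i : Fin (n + 1) => b i) := by
        rw [hb, extPlay, if_neg h]
      rw [h1]
      apply closedBall_subset_closedBall
      have he : ρ * (α * β) ^ (n + 1) = (α * ρ * (α * β) ^ n) * β := by ring
      rw [he]
      exact mul_le_of_le_one_right (by positivity) hβ1
  have := (hf ρ hρ b hblegal).1 N
  rwa [hba N le_rfl, hfun N le_rfl] at this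

/-- Interleaved strategy: at even stages play `f₁`, at odd stages play `f₂`. -/
private def combStrategy {X : Type*} (α β : ℝ)
    (f₁ f₂ : ℝ → (n : ℕ) → (Fin (n + 1) → X) → X) :
    ℝ → (n : ℕ) → (Fin (n + 1) → X) → X :=
  fun ρ n a =>
    if h : n % 2 = 0 then
      f₁ ρ (n / 2) (fun i : Fin (n / 2 + 1) => a ⟨2 * i.val, by have := i.isLt; omega⟩)
    else
      f₂ (α * β * ρ) (n / 2)
        (fun i : Fin (n / 2 + 1) => a ⟨2 * i.val + 1, by have := i.isLt; omega⟩)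

private lemma combStrategy_even {X : Type*} (α β : ℝ)
    (f₁ f₂ : ℝ → (n : ℕ) → (Fin (n + 1) → X) → X) (ρ : ℝ) {n m : ℕ}
    (hm : n = 2 * m) (a : Fin (n + 1) → X) :
    combStrategy α β f₁ f₂ ρ n a
      = f₁ ρ m (fun i : Fin (m + 1) => a ⟨2 * i.val, by have := i.isLt; omega⟩) := by
  have hm2 : m = n / 2 := by omega
  subst hm2
  rw [combStrategy]
  rw [dif_pos (by omega : n % 2 = 0)]

private lemma combStrategy_odd {X : Type*} (α β : ℝ)
    (f₁ f₂ : ℝ → (n : ℕ) → (Fin (n + 1) → X) → X) (ρ : ℝ) {n m : ℕ}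
    (hm : n = 2 * m + 1) (a : Fin (n + 1) → X) :
    combStrategy α β f₁ f₂ ρ n a
      = f₂ (α * β * ρ) m
          (fun i : Fin (m + 1) => a ⟨2 * i.val + 1, by have := i.isLt; omega⟩) := by
  have hm2 : m = n / 2 := by omega
  subst hm2
  rw [combStrategy]
  rw [dif_neg (by omega : ¬ n % 2 = 0)]

/-- The intersection of two `α`-winning sets in a complete metric space is `α`-winning. -/
theorem alphaWinning_inter {X : Type*} [MetricSpace X] [CompleteSpace X]
    (α : ℝ) (hα0 : 0 < α) (hα1 : α < 1) (W₁ W₂ : Set X)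
    (h₁ : IsAlphaWinning α W₁) (h₂ : IsAlphaWinning α W₂) :
    IsAlphaWinning α (W₁ ∩ W₂) := by
  intro β hβ0 hβ1
  have hβ'0 : 0 < α * β ^ 2 := by positivity
  have hβ'1 : α * β ^ 2 < 1 := by nlinarith [sq_nonneg β, mul_pos hβ0 hβ0]
  obtain ⟨f₁, hf₁⟩ := h₁ (α * β ^ 2) hβ'0 hβ'1
  obtain ⟨f₂, hf₂⟩ := h₂ (α * β ^ 2) hβ'0 hβ'1
  refine ⟨combStrategy α β f₁ f₂, ?_⟩
  intro ρ hρ a H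
  have hρ₂ : 0 < α * β * ρ := by positivity
  set a₁ : ℕ → X := fun m => a (2 * m) with ha₁
  set a₂ : ℕ → X := fun m => a (2 * m + 1) with ha₂
  have key : ∀ m : ℕ, (α * (α * β ^ 2)) ^ m = (α * β) ^ (2 * m) := by
    intro m
    rw [pow_mul]
    congr 1
    ring
  have r1 : ∀ m : ℕ, ρ * (α * (α * β ^ 2)) ^ m = ρ * (α * β) ^ (2 * m) := by
    intro m; rw [key]
  have r2 : ∀ m : ℕ, α * ρ * (α * (α * β ^ 2)) ^ m = α * ρ * (α * β) ^ (2 * m) := by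
    intro m; rw [key]
  have r3 : ∀ m : ℕ, α * β * ρ * (α * (α * β ^ 2)) ^ m = ρ * (α * β) ^ (2 * m + 1) := by
    intro m; rw [key]; ring
  have r4 : ∀ m : ℕ, α * (α * β * ρ) * (α * (α * β ^ 2)) ^ m
      = α * ρ * (α * β) ^ (2 * m + 1) := by
    intro m; rw [key]; ring
  -- Player A's legality at even stages, in (α β)-radius form
  have H1 : ∀ m : ℕ, closedBall (a (2 * m + 1)) (ρ * (α * β) ^ (2 * m + 1)) ⊆
      closedBall (f₁ ρ m fun i : Fin (m + 1) => a₁ i) (α * ρ * (α * β) ^ (2 * m)) := by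
    intro m
    have h := H (2 * m)
    rw [combStrategy_even α β f₁ f₂ ρ rfl] at h
    exact h
  -- Player A's legality at odd stages, in (α β)-radius form
  have H2 : ∀ m : ℕ, closedBall (a (2 * m + 2)) (ρ * (α * β) ^ (2 * m + 2)) ⊆
      closedBall (f₂ (α * β * ρ) m fun i : Fin (m + 1) => a₂ i)
        (α * ρ * (α * β) ^ (2 * m + 1)) := by
    intro m
    have h := H (2 * m + 1)
    rw [combStrategy_odd α β f₁ f₂ ρ rfl] at h
    exact h
  -- the even and odd subsequences are legal plays against f₁ and f₂ respectively
  have main : ∀ m : ℕ,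
      (closedBall (a₁ (m + 1)) (ρ * (α * (α * β ^ 2)) ^ (m + 1)) ⊆
        closedBall (f₁ ρ m fun i : Fin (m + 1) => a₁ i)
          (α * ρ * (α * (α * β ^ 2)) ^ m)) ∧
      (closedBall (a₂ (m + 1)) (α * β * ρ * (α * (α * β ^ 2)) ^ (m + 1)) ⊆
        closedBall (f₂ (α * β * ρ) m fun i : Fin (m + 1) => a₂ i)
          (α * (α * β * ρ) * (α * (α * β ^ 2)) ^ m)) := by
    intro m
    induction m using Nat.strong_induction_on with
    | _ m ih =>
      have hC₂ : closedBall (f₂ (α * β * ρ) m fun i : Fin (m + 1) => a₂ i)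
          (α * (α * β * ρ) * (α * (α * β ^ 2)) ^ m) ⊆
          closedBall (a₂ m) (α * β * ρ * (α * (α * β ^ 2)) ^ m) :=
        partial_containment hα0 hβ'0 hβ'1.le hf₂ hρ₂ a₂ m (fun k hk => (ih k hk).2)
      rw [r3 m, r4 m] at hC₂
      have hL₁ : closedBall (a₁ (m + 1)) (ρ * (α * (α * β ^ 2)) ^ (m + 1)) ⊆
          closedBall (f₁ ρ m fun i : Fin (m + 1) => a₁ i)
            (α * ρ * (α * (α * β ^ 2)) ^ m) := by
        rw [r1 (m + 1), r2 m, show 2 * (m + 1) = 2 * m + 2 from by ring]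
        calc closedBall (a₁ (m + 1)) (ρ * (α * β) ^ (2 * m + 2))
            ⊆ closedBall (f₂ (α * β * ρ) m fun i : Fin (m + 1) => a₂ i)
              (α * ρ * (α * β) ^ (2 * m + 1)) := H2 m
          _ ⊆ closedBall (a (2 * m + 1)) (ρ * (α * β) ^ (2 * m + 1)) := hC₂
          _ ⊆ _ := H1 m
      refine ⟨hL₁, ?_⟩
      have hlegs : ∀ k, k < m + 1 →
          closedBall (a₁ (k + 1)) (ρ * (α * (α * β ^ 2)) ^ (k + 1)) ⊆
            closedBall (f₁ ρ k fun i : Fin (k + 1) => a₁ i)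
              (α * ρ * (α * (α * β ^ 2)) ^ k) := by
        intro k hk
        rcases Nat.lt_succ_iff_lt_or_eq.mp hk with h | h
        · exact (ih k h).1
        · subst h; exact hL₁
      have hC₁ := partial_containment hα0 hβ'0 hβ'1.le hf₁ hρ a₁ (m + 1) hlegs
      rw [r1 (m + 1), r2 (m + 1),
        show 2 * (m + 1) = 2 * m + 2 from by ring] at hC₁
      have hH1 := H1 (m + 1)
      rw [show 2 * (m + 1) + 1 = 2 * m + 3 from by ring,
        show 2 * (m + 1) = 2 * m + 2 from by ring] at hH1
      rw [r3 (m + 1), r4 m, show 2 * (m + 1) + 1 = 2 * m + 3 from by ring]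
      calc closedBall (a₂ (m + 1)) (ρ * (α * β) ^ (2 * m + 3))
          ⊆ closedBall (f₁ ρ (m + 1) fun i : Fin (m + 2) => a₁ i)
            (α * ρ * (α * β) ^ (2 * m + 2)) := hH1
        _ ⊆ closedBall (a (2 * m + 2)) (ρ * (α * β) ^ (2 * m + 2)) := hC₁
        _ ⊆ _ := H2 m
  obtain ⟨hC₁, hW₁⟩ := hf₁ ρ hρ a₁ fun m => (main m).1
  obtain ⟨hC₂, hW₂⟩ := hf₂ (α * β * ρ) hρ₂ a₂ fun m => (main m).2
  refine ⟨?_, ?_⟩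
  · intro n
    rcases Nat.even_or_odd n with ⟨m, hm⟩ | ⟨m, hm⟩
    · obtain rfl : n = 2 * m := by omega
      rw [combStrategy_even α β f₁ f₂ ρ rfl]
      have h := hC₁ m
      rw [r1 m, r2 m] at h
      exact h
    · obtain rfl : n = 2 * m + 1 := by omega
      rw [combStrategy_odd α β f₁ f₂ ρ rfl]
      have h := hC₂ m
      rw [r3 m, r4 m] at h
      exact h
  · intro x hx
    constructor
    · apply hW₁ x
      intro m
      rw [r1 m]
      exact hx (2 * m)
    · apply hW₂ x
      intro m
      rw [r3 m]
      exact hx (2 * m + 1)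
end
end
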